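/- Let k ≥ 0 and n ≥ k+2, and let X be a homogeneous and spatially independent random subcomplex of Δₙ. Let T ⊆ Δₙ be a (k+1)-tree with P(T ⊆ X) > 0, and let σ₁, σ₂, …, σ_i be (k+1)-simplices of Δₙ none of which belongs to T. Then P(σ_j ∉ X for all j = 1,…,i | T ⊆ X) ≥ 1 − i·s_k. -/

import Mathlib

open MeasureTheory Finset Filter


/-- A (sub)complex of the complete complex on the vertex type `V`:
a family of finite subsets closed under taking subsets and containing `∅`. -/
def SComplex {V : Type*} [DecidableEq V] (Y : Finset (Finset V)) : Prop :=
  ∅ ∈ Y ∧ ∀ σ ∈ Y, ∀ τ ∈ σ.powerset, τ ∈ Y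

instance {V : Type*} [DecidableEq V] :
    DecidablePred (fun Y : Finset (Finset V) => SComplex Y) :=
  fun Y => decidable_of_iff (∅ ∈ Y ∧ ∀ σ ∈ Y, ∀ τ ∈ σ.powerset, τ ∈ Y) Iff.rfl

/-- `scount Y m` = number of simplices of `Y` with `m` vertices (i.e. `(m-1)`-simplices);
`f_k(Y) = scount Y (k+1)` and `f_{-1}(Y) = scount Y 0`. -/
def scount {V : Type*} (Y : Finset (Finset V)) (m : ℕ) : ℕ :=
  (Y.filter (fun σ => σ.card = m)).card

/-- Number of external `i`-simplices of `Y` in the complete complex on `Fin n`: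
`i`-simplices `σ ∉ Y` all of whose strict subsets lie in `Y`. -/
def ecount {n : ℕ} (Y : Finset (Finset (Fin n))) (i : ℕ) : ℕ :=
  (Finset.univ.filter (fun σ : Finset (Fin n) =>
    σ.card = i + 1 ∧ σ ∉ Y ∧ ∀ τ ∈ σ.powerset, τ ≠ σ → τ ∈ Y)).card

/-- The weight `∏_{i=0}^{n-1} p_i^{f_i(Y)} (1-p_i)^{e_i(Y)}` of the
multi-parameter random simplicial complex model. -/
noncomputable def mpWeight {n : ℕ} (p : Fin n → ℝ) (Y : Finset (Finset (Fin n))) : ℝ :=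
  ∏ i : Fin n, p i ^ scount Y (i.1 + 1) * (1 - p i) ^ ecount Y i.1

/-- The probability of an event, as a real number. -/
noncomputable def prb {Ω : Type*} [MeasurableSpace Ω] (μ : Measure Ω) (A : Set Ω) : ℝ :=
  (μ A).toReal

/-- Conditional probability `P(A | B)`, as a real number. -/
noncomputable def condP {Ω : Type*} [MeasurableSpace Ω] (μ : Measure Ω) (A B : Set Ω) : ℝ :=
  prb μ (A ∩ B) / prb μ B

/-- A random subcomplex is homogeneous if its distribution is invariant under
every permutation of the vertices. -/
def Homogeneous {n : ℕ} {Ω : Type*} [MeasurableSpace Ω] (μ : Measure Ω)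
    (X : Ω → Finset (Finset (Fin n))) : Prop :=
  ∀ (g : Equiv.Perm (Fin n)) (Y : Finset (Finset (Fin n))),
    prb μ {ω | Finset.image (fun σ => σ.image (⇑g)) (X ω) = Y} = prb μ {ω | X ω = Y}

/-- Spatial independence of a random subcomplex. -/
def SpatInd {n : ℕ} {Ω : Type*} [MeasurableSpace Ω] (μ : Measure Ω)
    (X : Ω → Finset (Finset (Fin n))) : Prop :=
  ∀ Y₁ Y₂ : Finset (Finset (Fin n)), SComplex Y₁ → SComplex Y₂ →
    prb μ {ω | Y₁ ∪ Y₂ ⊆ X ω} * prb μ {ω | Y₁ ∩ Y₂ ⊆ X ω} =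
      prb μ {ω | Y₁ ⊆ X ω} * prb μ {ω | Y₂ ⊆ X ω}

/-- The `k`-dimensional standard simplex `{0, 1, …, k}` in `Fin n`
(for `k = -1` this is the empty simplex). -/
def stdSimp (n : ℕ) (k : ℤ) : Finset (Fin n) :=
  Finset.univ.filter (fun v => (v : ℤ) ≤ k)

/-- The `k`-dimensional simplex `{1, 2, …, k+1}` in `Fin n`,
sharing `k` vertices with `stdSimp n k`. -/
def stdSimp' (n : ℕ) (k : ℕ) : Finset (Fin n) :=
  Finset.univ.filter (fun v => 1 ≤ (v : ℕ) ∧ (v : ℕ) ≤ k + 1)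

/-- The parameter `q_k = P(τ ∈ X)` for a `k`-simplex `τ` (with `q_{-1} = 1`). -/
noncomputable def qpar {n : ℕ} {Ω : Type*} [MeasurableSpace Ω] (μ : Measure Ω)
    (X : Ω → Finset (Finset (Fin n))) (k : ℤ) : ℝ :=
  if k < 0 then 1 else prb μ {ω | stdSimp n k ∈ X ω}

/-- The parameter `r_k = P(σ ∈ X | τ ∈ X)` for a `(k+1)`-simplex `σ` containing the
`k`-simplex `τ`, if `q_k > 0`, and `0` otherwise (with `r_{-1} = q_0`). -/
noncomputable def rpar {n : ℕ} {Ω : Type*} [MeasurableSpace Ω] (μ : Measure Ω)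
    (X : Ω → Finset (Finset (Fin n))) (k : ℤ) : ℝ :=
  if 0 < qpar μ X k then
    condP μ {ω | stdSimp n (k + 1) ∈ X ω} {ω | stdSimp n k ∈ X ω}
  else 0

/-- The parameter `s_k = P(τ₁ ∪ τ₂ ∈ X | τ₁ ∈ X, τ₂ ∈ X)` for `k`-simplices `τ₁, τ₂`
sharing `k` vertices, if `P(τ₁ ∈ X, τ₂ ∈ X) > 0`, and `0` otherwise. -/
noncomputable def spar {n : ℕ} {Ω : Type*} [MeasurableSpace Ω] (μ : Measure Ω)
    (X : Ω → Finset (Finset (Fin n))) (k : ℕ) : ℝ :=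
  if 0 < prb μ ({ω | stdSimp n k ∈ X ω} ∩ {ω | stdSimp' n k ∈ X ω}) then
    condP μ {ω | stdSimp n (k + 1) ∈ X ω}
      ({ω | stdSimp n k ∈ X ω} ∩ {ω | stdSimp' n k ∈ X ω})
  else 0


/-- `SimpRootedTree n k T τ` : the simplicial complex `T` on `Fin n` is a `k`-rooted tree
with root the `k`-simplex `τ`, i.e. it is obtained from the full simplex on `τ` by
repeatedly attaching, to a `k`-simplex `τ'` already present, all subsets of
`τ' ∪ {v}` for a fresh vertex `v`. A `(k+1)`-tree is a complex admitting such a root. -/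
inductive SimpRootedTree (n k : ℕ) : Finset (Finset (Fin n)) → Finset (Fin n) → Prop
  | base (τ : Finset (Fin n)) (hτ : τ.card = k + 1) : SimpRootedTree n k τ.powerset τ
  | attach (T : Finset (Finset (Fin n))) (τ τ' : Finset (Fin n)) (v : Fin n)
      (hT : SimpRootedTree n k T τ) (hτ' : τ' ∈ T) (hcard : τ'.card = k + 1)
      (hv : ∀ σ ∈ T, v ∉ σ) :
      SimpRootedTree n k (T ∪ (insert v τ').powerset) τ


/-!
A `(k+2)`-set `σ ∉ T` misses some edge `{a, b}` of `T`, since a rooted tree contains every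
simplex all of whose edges it contains. Then `T ∩ 2^σ` lies in `D = 2^(σ∖a) ∪ 2^(σ∖b)`, and
spatial independence gives
`P(σ ∈ X | T ⊆ X) = P(2^σ ⊆ X) / P(T ∩ 2^σ ⊆ X) ≤ P(2^σ ⊆ X) / P(D ⊆ X)`,
which equals `s_k` by homogeneity (a permutation carries `σ∖a, σ∖b` to the two standard
`k`-simplices). A union bound over the `σ_j` finishes the proof.
-/

open ProbabilityTheory
open scoped Pointwise

namespace SComplex
variable {V : Type*} [DecidableEq V] {Y : Finset (Finset V)}

lemma powerset (s : Finset V) : SComplex s.powerset :=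
  ⟨Finset.empty_mem_powerset s, fun _ hσ _ hτ =>
    Finset.mem_powerset.2 ((Finset.mem_powerset.1 hτ).trans (Finset.mem_powerset.1 hσ))⟩

lemma union {Z : Finset (Finset V)} (hY : SComplex Y) (hZ : SComplex Z) : SComplex (Y ∪ Z) := by
  refine ⟨Finset.mem_union_left _ hY.1, fun σ hσ τ hτ => ?_⟩
  rcases Finset.mem_union.1 hσ with h | h
  · exact Finset.mem_union_left _ (hY.2 σ h τ hτ)
  · exact Finset.mem_union_right _ (hZ.2 σ h τ hτ)

lemma mem_of_subset (hY : SComplex Y) {σ τ : Finset V} (hσ : σ ∈ Y) (hτσ : τ ⊆ σ) : τ ∈ Y :=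
  hY.2 σ hσ τ (Finset.mem_powerset.2 hτσ)

lemma powerset_subset_iff (hY : SComplex Y) {σ : Finset V} : σ.powerset ⊆ Y ↔ σ ∈ Y :=
  ⟨fun h => h (Finset.mem_powerset_self σ), fun h _ hτ => hY.2 σ h _ hτ⟩

lemma inter_powerset_subset_of_pair_notMem (hY : SComplex Y) {σ : Finset V} {a b : V}
    (hab : {a, b} ∉ Y) : Y ∩ σ.powerset ⊆ (σ.erase a).powerset ∪ (σ.erase b).powerset := by
  intro ρ hρ
  obtain ⟨hρY, hρσ⟩ := Finset.mem_inter.1 hρ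
  rw [Finset.mem_powerset] at hρσ
  by_cases ha : a ∈ ρ
  · have hb : b ∉ ρ := fun hb => hab (hY.mem_of_subset hρY (Finset.insert_subset ha
      (Finset.singleton_subset_iff.2 hb)))
    exact Finset.mem_union_right _ (Finset.mem_powerset.2 (Finset.subset_erase.2 ⟨hρσ, hb⟩))
  · exact Finset.mem_union_left _ (Finset.mem_powerset.2 (Finset.subset_erase.2 ⟨hρσ, ha⟩))

end SComplex

namespace SimpRootedTree
variable {n k : ℕ} {T : Finset (Finset (Fin n))} {τ : Finset (Fin n)}

lemma sComplex (h : SimpRootedTree n k T τ) : SComplex T := by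
  induction h with
  | base τ _ => exact SComplex.powerset τ
  | attach _ _ _ _ _ _ _ _ ih => exact ih.union (SComplex.powerset _)

lemma mem_of_forall_pair_mem (h : SimpRootedTree n k T τ) {σ : Finset (Fin n)}
    (hσ : 1 < #σ) (hpairs : ∀ x ∈ σ, ∀ y ∈ σ, x ≠ y → {x, y} ∈ T) : σ ∈ T := by
  induction h with
  | base τ _ =>
    refine Finset.mem_powerset.2 fun x hx => ?_
    obtain ⟨y, hy, hyx⟩ := Finset.exists_mem_ne hσ x
    exact Finset.mem_powerset.1 (hpairs x hx y hy hyx.symm) (Finset.mem_insert_self x _)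
  | attach T τ τ' v hT hτ' _ hv ih =>
    by_cases hvσ : v ∈ σ
    · refine Finset.mem_union_right _ (Finset.mem_powerset.2 fun x hx => ?_)
      by_cases hxv : x = v
      · exact hxv ▸ Finset.mem_insert_self v τ'
      rcases Finset.mem_union.1 (hpairs v hvσ x hx (Ne.symm hxv)) with hT' | hsub
      · exact absurd (Finset.mem_insert_self v _) (hv _ hT')
      · exact Finset.mem_powerset.1 hsub (by simp)
    · refine Finset.mem_union_left _ (ih fun x hx y hy hxy => ?_)
      rcases Finset.mem_union.1 (hpairs x hx y hy hxy) with hT' | hsub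
      · exact hT'
      · refine hT.sComplex.mem_of_subset hτ' fun z hz => ?_
        have hxyσ : {x, y} ⊆ σ := Finset.insert_subset hx (Finset.singleton_subset_iff.2 hy)
        exact Finset.mem_of_mem_insert_of_ne (Finset.mem_powerset.1 hsub hz)
          (ne_of_mem_of_not_mem (hxyσ hz) hvσ)

end SimpRootedTree

lemma Equiv.Perm.exists_smul_finset_eq_of_pair {α : Type*} [Fintype α] [DecidableEq α]
    {s t : Finset α} (h : #s = #t) {x y a b : α} (hx : x ∈ s) (hy : y ∈ s) (hxy : x ≠ y)
    (ha : a ∈ t) (hb : b ∈ t) (hab : a ≠ b) :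
    ∃ g : Equiv.Perm α, g • s = t ∧ g x = a ∧ g y = b := by
  obtain ⟨e, he⟩ := Finset.exists_equiv_extend_of_card_eq (α := s) (t := t) (by simp [h])
    (s := {⟨x, hx⟩, ⟨y, hy⟩}) (f := fun z => if (z : α) = x then a else b)
    (by simp [Finset.insert_subset_iff, ha, hb, hxy.symm])
    (by simp [Set.InjOn, hxy, hxy.symm, hab, hab.symm])
  refine ⟨e.extendSubtype, ?_, ?_, ?_⟩
  · refine Finset.eq_of_subset_of_card_le (fun z hz => ?_) (by simp [Finset.card_smul_finset, h])
    obtain ⟨w, hw, rfl⟩ := Finset.mem_smul_finset.1 hz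
    exact e.extendSubtype_mem w hw
  · rw [e.extendSubtype_apply_of_mem x hx, he _ (by simp)]; simp
  · rw [e.extendSubtype_apply_of_mem y hy, he _ (by simp)]; simp [hxy.symm]

lemma Finset.smul_finset_erase {G α : Type*} [Group G] [MulAction G α] [DecidableEq α] (g : G)
    (s : Finset α) (x : α) : g • s.erase x = (g • s).erase (g • x) := by
  rw [erase_eq, erase_eq, smul_finset_sdiff, smul_finset_singleton]

section StdSimplex
variable {n : ℕ}

lemma mem_stdSimp {m : ℤ} {v : Fin n} : v ∈ stdSimp n m ↔ (v : ℤ) ≤ m := by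
  simp [stdSimp]

lemma card_stdSimp_succ {k : ℕ} (hn : k + 2 ≤ n) : #(stdSimp n ((k : ℤ) + 1)) = k + 2 := by
  have : stdSimp n ((k : ℤ) + 1) = Finset.Iic ⟨k + 1, by omega⟩ := by
    ext v; simp [mem_stdSimp, Fin.le_def]; omega
  rw [this, Fin.card_Iic]

lemma stdSimp_eq_erase {k : ℕ} (hn : k + 2 ≤ n) :
    stdSimp n k = (stdSimp n ((k : ℤ) + 1)).erase ⟨k + 1, by omega⟩ := by
  ext v; simp [mem_stdSimp, Fin.ext_iff]; omega

lemma stdSimp'_eq_erase {k : ℕ} (hn : k + 2 ≤ n) :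
    stdSimp' n k = (stdSimp n ((k : ℤ) + 1)).erase ⟨0, by omega⟩ := by
  ext v; simp [stdSimp', mem_stdSimp, Fin.ext_iff]; omega

lemma exists_perm_smul_stdSimp {k : ℕ} (hn : k + 2 ≤ n) {σ : Finset (Fin n)} (hσ : #σ = k + 2)
    {a b : Fin n} (ha : a ∈ σ) (hb : b ∈ σ) (hab : a ≠ b) :
    ∃ g : Equiv.Perm (Fin n), g • stdSimp n ((k : ℤ) + 1) = σ ∧
      g • stdSimp n k = σ.erase a ∧ g • stdSimp' n k = σ.erase b := by
  obtain ⟨g, hg, hga, hgb⟩ := Equiv.Perm.exists_smul_finset_eq_of_pair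
    ((card_stdSimp_succ hn).trans hσ.symm) (x := ⟨k + 1, by omega⟩) (y := ⟨0, by omega⟩)
    (by simp [mem_stdSimp]) (by simp [mem_stdSimp]; omega) (by simp) ha hb hab
  refine ⟨g, hg, ?_, ?_⟩
  · rw [stdSimp_eq_erase hn, Finset.smul_finset_erase, hg, Equiv.Perm.smul_def, hga]
  · rw [stdSimp'_eq_erase hn, Finset.smul_finset_erase, hg, Equiv.Perm.smul_def, hgb]

end StdSimplex

lemma setOf_mem_eq_setOf_powerset_subset {V Ω : Type*} [DecidableEq V] {X : Ω → Finset (Finset V)}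
    (hXc : ∀ ω, SComplex (X ω)) (σ : Finset V) :
    {ω | σ ∈ X ω} = {ω | σ.powerset ⊆ X ω} := by
  ext ω; exact (hXc ω).powerset_subset_iff.symm

section CondProb
variable {Ω : Type*} [MeasurableSpace Ω] (μ : Measure Ω)

lemma measurableSet_setOf_of_measurableSet_fiber {β : Type*} [Countable β] {f : Ω → β}
    (hf : ∀ y, MeasurableSet {ω | f ω = y}) (P : β → Prop) : MeasurableSet {ω | P (f ω)} := by
  have : {ω | P (f ω)} = ⋃ (y) (_ : P y), {ω | f ω = y} := by ext; simp
  rw [this]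
  exact .iUnion fun y => .iUnion fun _ => hf y

lemma condP_eq_measureReal_cond {A B : Set Ω} (hB : MeasurableSet B) :
    condP μ A B = μ[|B].real A := by
  rw [measureReal_def, cond_apply hB, ENNReal.toReal_mul, ENNReal.toReal_inv, condP, prb, prb,
    Set.inter_comm, div_eq_inv_mul]

lemma condP_iUnion_le {ι : Type*} [Fintype ι] (A : ι → Set Ω) {B : Set Ω}
    (hB : MeasurableSet B) : condP μ (⋃ j, A j) B ≤ ∑ j, condP μ (A j) B := by
  simp only [condP_eq_measureReal_cond μ hB]
  exact measureReal_iUnion_fintype_le _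

lemma condP_compl [IsFiniteMeasure μ] {A B : Set Ω} (hA : MeasurableSet A)
    (hB : MeasurableSet B) (hB₀ : prb μ B ≠ 0) : condP μ Aᶜ B = 1 - condP μ A B := by
  have : IsProbabilityMeasure μ[|B] :=
    cond_isProbabilityMeasure_of_finite (fun h => hB₀ (by simp [prb, h])) (measure_ne_top μ B)
  rw [condP_eq_measureReal_cond μ hB, condP_eq_measureReal_cond μ hB,
    probReal_compl_eq_one_sub hA]

lemma prb_mono [IsFiniteMeasure μ] {A B : Set Ω} (h : A ⊆ B) : prb μ A ≤ prb μ B :=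
  measureReal_mono h

lemma prb_setOf_eq_sum [IsFiniteMeasure μ] {β : Type*} [Fintype β] {f : Ω → β}
    (hf : ∀ y, MeasurableSet {ω | f ω = y}) (P : β → Prop) [DecidablePred P] :
    prb μ {ω | P (f ω)} = ∑ y with P y, prb μ {ω | f ω = y} := by
  have hunion : {ω | P (f ω)} = ⋃ y ∈ ({y | P y} : Finset β), {ω | f ω = y} := by ext; simp
  rw [prb, ← measureReal_def, hunion, measureReal_biUnion_finset
    (fun _ _ _ _ hne => Set.disjoint_left.2 fun _ h₁ h₂ => hne (h₁.symm.trans h₂))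
    (fun y _ => hf y)]
  rfl

end CondProb

section RandomComplex
variable {n : ℕ} {Ω : Type*} [MeasurableSpace Ω] {μ : Measure Ω} [IsFiniteMeasure μ]
  {X : Ω → Finset (Finset (Fin n))}

lemma Homogeneous.prb_smul (hhom : Homogeneous μ X) (hmeas : ∀ Y, MeasurableSet {ω | X ω = Y})
    (g : Equiv.Perm (Fin n)) (P : Finset (Finset (Fin n)) → Prop) :
    prb μ {ω | P (g • X ω)} = prb μ {ω | P (X ω)} := by
  classical
  have hmeas' : ∀ Y, MeasurableSet {ω | g • X ω = Y} := fun Y => by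
    simpa only [← eq_inv_smul_iff] using hmeas (g⁻¹ • Y)
  rw [prb_setOf_eq_sum μ hmeas', prb_setOf_eq_sum μ hmeas]
  exact Finset.sum_congr rfl fun Y _ => hhom g Y

lemma spar_eq_condP {k : ℕ} (hn : k + 2 ≤ n) (hhom : Homogeneous μ X)
    (hmeas : ∀ Y, MeasurableSet {ω | X ω = Y}) {σ : Finset (Fin n)} (hσ : #σ = k + 2)
    {a b : Fin n} (ha : a ∈ σ) (hb : b ∈ σ) (hab : a ≠ b) :
    spar μ X k = condP μ {ω | σ ∈ X ω} ({ω | σ.erase a ∈ X ω} ∩ {ω | σ.erase b ∈ X ω}) := by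
  obtain ⟨g, hg, hga, hgb⟩ := exists_perm_smul_stdSimp hn hσ ha hb hab
  have htransport (P : Finset (Finset (Fin n)) → Prop) :
      prb μ {ω | P (X ω)} = prb μ {ω | P (g⁻¹ • X ω)} := (hhom.prb_smul hmeas g⁻¹ P).symm
  -- when the conditioning event is null, `condP` is `_ / 0 = 0`, matching the `else` branch
  have hspar : spar μ X k = condP μ {ω | stdSimp n ((k : ℤ) + 1) ∈ X ω}
      ({ω | stdSimp n k ∈ X ω} ∩ {ω | stdSimp' n k ∈ X ω}) := by
    rw [spar]
    split_ifs with hpos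
    · rfl
    · rw [condP, le_antisymm (not_lt.1 hpos) ENNReal.toReal_nonneg, div_zero]
  rw [hspar, condP, condP, ← hga, ← hgb, ← hg]
  congr 1
  · have h := htransport fun Y => stdSimp n ((k : ℤ) + 1) ∈ Y ∧ stdSimp n k ∈ Y ∧ stdSimp' n k ∈ Y
    simp only [Finset.mem_inv_smul_finset_iff] at h
    exact h
  · have h := htransport fun Y => stdSimp n k ∈ Y ∧ stdSimp' n k ∈ Y
    simp only [Finset.mem_inv_smul_finset_iff] at h
    exact h

lemma SpatInd.condP_mem_eq (hsi : SpatInd μ X) (hXc : ∀ ω, SComplex (X ω))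
    {T : Finset (Finset (Fin n))} (hT : SComplex T) (hTpos : 0 < prb μ {ω | T ⊆ X ω})
    (σ : Finset (Fin n)) :
    condP μ {ω | σ ∈ X ω} {ω | T ⊆ X ω} =
      prb μ {ω | σ.powerset ⊆ X ω} / prb μ {ω | T ∩ σ.powerset ⊆ X ω} := by
  have hinter : {ω | σ ∈ X ω} ∩ {ω | T ⊆ X ω} = {ω | T ∪ σ.powerset ⊆ X ω} := by
    ext ω; simp [Finset.union_subset_iff, (hXc ω).powerset_subset_iff, and_comm]
  have hpos : 0 < prb μ {ω | T ∩ σ.powerset ⊆ X ω} :=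
    hTpos.trans_le (prb_mono μ fun ω h => Finset.inter_subset_left.trans h)
  rw [condP, hinter, div_eq_div_iff hTpos.ne' hpos.ne']
  exact (hsi T σ.powerset hT (SComplex.powerset σ)).trans (mul_comm _ _)

lemma condP_mem_le_spar {k : ℕ} (hn : k + 2 ≤ n) (hhom : Homogeneous μ X)
    (hmeas : ∀ Y, MeasurableSet {ω | X ω = Y}) (hsi : SpatInd μ X)
    (hXc : ∀ ω, SComplex (X ω)) {T : Finset (Finset (Fin n))} {τ : Finset (Fin n)}
    (hT : SimpRootedTree n k T τ) (hTpos : 0 < prb μ {ω | T ⊆ X ω}) {σ : Finset (Fin n)}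
    (hσ : #σ = k + 2) (hσT : σ ∉ T) :
    condP μ {ω | σ ∈ X ω} {ω | T ⊆ X ω} ≤ spar μ X k := by
  obtain ⟨a, ha, b, hb, hab, habT⟩ : ∃ a ∈ σ, ∃ b ∈ σ, a ≠ b ∧ {a, b} ∉ T := by
    by_contra! h
    exact hσT (hT.mem_of_forall_pair_mem (by omega) h)
  set D := (σ.erase a).powerset ∪ (σ.erase b).powerset
  have hnum : {ω | σ ∈ X ω} ∩ ({ω | σ.erase a ∈ X ω} ∩ {ω | σ.erase b ∈ X ω}) =
      {ω | σ.powerset ⊆ X ω} := by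
    rw [← setOf_mem_eq_setOf_powerset_subset hXc]
    exact Set.inter_eq_left.2 fun ω h =>
      ⟨(hXc ω).mem_of_subset h (σ.erase_subset a), (hXc ω).mem_of_subset h (σ.erase_subset b)⟩
  have hden : {ω | σ.erase a ∈ X ω} ∩ {ω | σ.erase b ∈ X ω} = {ω | D ⊆ X ω} := by
    ext ω; simp [D, Finset.union_subset_iff, (hXc ω).powerset_subset_iff]
  have hDle : prb μ {ω | D ⊆ X ω} ≤ prb μ {ω | T ∩ σ.powerset ⊆ X ω} :=
    prb_mono μ fun ω h => (hT.sComplex.inter_powerset_subset_of_pair_notMem habT).trans h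
  have hDσ : D ⊆ σ.powerset := Finset.union_subset (Finset.powerset_mono.2 (σ.erase_subset a))
    (Finset.powerset_mono.2 (σ.erase_subset b))
  rw [spar_eq_condP hn hhom hmeas hσ ha hb hab, hsi.condP_mem_eq hXc hT.sComplex hTpos, condP,
    hnum, hden]
  rcases (measureReal_nonneg : 0 ≤ prb μ {ω | D ⊆ X ω}).eq_or_lt with hD | hD
  · have hσ0 : prb μ {ω | σ.powerset ⊆ X ω} = 0 :=
      le_antisymm (hD ▸ prb_mono μ fun ω h => hDσ.trans h) measureReal_nonneg
    simp [hσ0]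
  · exact div_le_div_of_nonneg_left measureReal_nonneg hD hDle

end RandomComplex

theorem tree_avoid_simplices_condP_general (n k : ℕ) (hn : k + 2 ≤ n)
    {Ω : Type*} [MeasurableSpace Ω] (μ : Measure Ω) [IsProbabilityMeasure μ]
    (X : Ω → Finset (Finset (Fin n)))
    (hmeas : ∀ Y, MeasurableSet {ω | X ω = Y})
    (hXc : ∀ ω, SComplex (X ω))
    (hhom : Homogeneous μ X) (hsi : SpatInd μ X)
    (T : Finset (Finset (Fin n))) (hT : ∃ τ, SimpRootedTree n k T τ)
    (hTpos : 0 < prb μ {ω | T ⊆ X ω})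
    (i : ℕ) (σ : Fin i → Finset (Fin n))
    (hσcard : ∀ j, (σ j).card = k + 2) (hσT : ∀ j, σ j ∉ T) :
    1 - (i : ℝ) * spar μ X k ≤ condP μ {ω | ∀ j, σ j ∉ X ω} {ω | T ⊆ X ω} := by
  obtain ⟨τ, hτ⟩ := hT
  have hB : MeasurableSet {ω | T ⊆ X ω} := measurableSet_setOf_of_measurableSet_fiber hmeas _
  have hA : MeasurableSet (⋃ j, {ω | σ j ∈ X ω}) :=
    .iUnion fun j => measurableSet_setOf_of_measurableSet_fiber hmeas (σ j ∈ ·)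
  have hcompl : {ω | ∀ j, σ j ∉ X ω} = (⋃ j, {ω | σ j ∈ X ω})ᶜ := by ext; simp
  calc 1 - (i : ℝ) * spar μ X k = 1 - ∑ _j : Fin i, spar μ X k := by simp
    _ ≤ 1 - ∑ j, condP μ {ω | σ j ∈ X ω} {ω | T ⊆ X ω} := by
      gcongr with j
      exact condP_mem_le_spar hn hhom hmeas hsi hXc hτ hTpos (hσcard j) (hσT j)
    _ ≤ 1 - condP μ (⋃ j, {ω | σ j ∈ X ω}) {ω | T ⊆ X ω} := by
      gcongr
      exact condP_iUnion_le μ _ hB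
    _ = condP μ {ω | ∀ j, σ j ∉ X ω} {ω | T ⊆ X ω} := by
      rw [hcompl, condP_compl μ hA hB hTpos.ne']

/-- for a `(k+1)`-tree `T` with `P(T ⊆ X) > 0` and `(k+1)`-simplices
`σ₁,…,σ_i ∉ T`, one has `P(σ_j ∉ X for all j | T ⊆ X) ≥ 1 - i·s_k`. -/
theorem tree_avoid_simplices_condP (n k : ℕ) (hn : k + 2 ≤ n)
    {Ω : Type*} [MeasurableSpace Ω] (μ : Measure Ω) [IsProbabilityMeasure μ]
    (X : Ω → Finset (Finset (Fin n)))
    (hmeas : ∀ Y, MeasurableSet {ω | X ω = Y})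
    (hXc : ∀ ω, SComplex (X ω))
    (hhom : Homogeneous μ X) (hsi : SpatInd μ X)
    (T : Finset (Finset (Fin n))) (hT : ∃ τ, SimpRootedTree n k T τ)
    (hTpos : 0 < prb μ {ω | T ⊆ X ω})
    (i : ℕ) (σ : Fin i → Finset (Fin n)) (hσinj : Function.Injective σ)
    (hσcard : ∀ j, (σ j).card = k + 2) (hσT : ∀ j, σ j ∉ T) :
    1 - (i : ℝ) * spar μ X k ≤ condP μ {ω | ∀ j, σ j ∉ X ω} {ω | T ⊆ X ω} :=
  tree_avoid_simplices_condP_general n k hn μ X hmeas hXc hhom hsi T hT hTpos i σ hσcard hσT
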